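/- For every integer n ≥ 3, ∑_T ∑_{ {l,j,r} triangle of T, l < j < r } (j − l) = 2^{2n−5} − binom(2n−5, n−2), where the outer sum ranges over all triangulations T of P_n; equivalently, the expected total sum of j − l over the triangles {l, j, r} (l < j < r) of a uniformly random triangulation of P_n is (2^{2n−5} − binom(2n−5, n−2)) / C_{n−2}. -/
import Mathlib


open Finset
open scoped Classical

/-- `IsDiag l r i j` : the pair `{i, j}` (written with `i < j`) is a diagonal of the
convex sub-polygon on vertices `{l, …, r}`. -/
def IsDiag (l r i j : ℕ) : Prop :=
  l ≤ i ∧ i + 2 ≤ j ∧ j ≤ r ∧ ¬(i = l ∧ j = r)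

/-- Two diagonals `{a, b}` and `{c, d}` (written with `a < b`, `c < d`) cross. -/
def Crosses (a b c d : ℕ) : Prop :=
  (a < c ∧ c < b ∧ b < d) ∨ (c < a ∧ a < d ∧ d < b)

/-- All diagonals of the sub-polygon on `{l, …, r}`, as ordered pairs. -/
noncomputable def allDiags (l r : ℕ) : Finset (ℕ × ℕ) :=
  (range (r + 1) ×ˢ range (r + 1)).filter fun p => IsDiag l r p.1 p.2

/-- The triangulations of the sub-polygon on `{l, …, r}` : sets of `r - l - 2`
pairwise noncrossing diagonals. -/
noncomputable def triangulations (l r : ℕ) : Finset (Finset (ℕ × ℕ)) :=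
  (allDiags l r).powerset.filter fun T =>
    T.card = r - l - 2 ∧ ∀ d ∈ T, ∀ e ∈ T, ¬ Crosses d.1 d.2 e.1 e.2

/-- `IsEdge l r i j` : the pair `{i, j}` (with `i < j`) is an edge (boundary side) of the
sub-polygon on `{l, …, r}`. -/
def IsEdge (l r i j : ℕ) : Prop :=
  (l ≤ i ∧ j = i + 1 ∧ j ≤ r) ∨ (i = l ∧ j = r)

/-- `{i, j}` is a side available in the triangulation `T` (an edge of the polygon or a
diagonal of `T`). -/
def IsSide (l r : ℕ) (T : Finset (ℕ × ℕ)) (i j : ℕ) : Prop :=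
  IsEdge l r i j ∨ (i, j) ∈ T

/-- The triangles of a triangulation `T` of the sub-polygon on `{l, …, r}`, as ordered
triples `(a, b, c)` with `a < b < c`, each of whose three sides is an edge or a diagonal
of `T`. -/
noncomputable def triangles (l r : ℕ) (T : Finset (ℕ × ℕ)) : Finset (ℕ × ℕ × ℕ) :=
  (range (r + 1) ×ˢ range (r + 1) ×ˢ range (r + 1)).filter fun t =>
    t.1 < t.2.1 ∧ t.2.1 < t.2.2 ∧
      IsSide l r T t.1 t.2.1 ∧ IsSide l r T t.2.1 t.2.2 ∧ IsSide l r T t.1 t.2.2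

/-- The number of sides of the triangle `{a, b, c}` (with `a < b < c`) that are edges of
the sub-polygon on `{l, …, r}`. -/
noncomputable def edgeCount (l r a b c : ℕ) : ℕ :=
  (if IsEdge l r a b then 1 else 0) + (if IsEdge l r b c then 1 else 0) +
    (if IsEdge l r a c then 1 else 0)

/-- `O(T)` : the number of triangles of `T` with exactly one side an edge of `P_n`. -/
noncomputable def oneSideCount (n : ℕ) (T : Finset (ℕ × ℕ)) : ℕ :=
  ((triangles 1 n T).filter fun t => edgeCount 1 n t.1 t.2.1 t.2.2 = 1).card

/-- `Ear(T)` : the number of triangles of `T` with at least two sides edges of `P_n`. -/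
noncomputable def earCount (n : ℕ) (T : Finset (ℕ × ℕ)) : ℕ :=
  ((triangles 1 n T).filter fun t => 2 ≤ edgeCount 1 n t.1 t.2.1 t.2.2).card

/-- `D(T)` : the number of triangles of `T` containing vertex `1`. -/
noncomputable def degOne (n : ℕ) (T : Finset (ℕ × ℕ)) : ℕ :=
  ((triangles 1 n T).filter fun t => t.1 = 1 ∨ t.2.1 = 1 ∨ t.2.2 = 1).card

/-- `B(T)` : the number of triangles `{l, j, r}` of `T` (with `l < j < r`) such that
`j - l = 1`. -/
noncomputable def blueCount (n : ℕ) (T : Finset (ℕ × ℕ)) : ℕ :=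
  ((triangles 1 n T).filter fun t => t.2.1 - t.1 = 1).card

/-- `A_i(T)` : the number of triangles `{1, a, b}` of `T` containing vertex `1`
(written with `1 < a < b`) such that `b - a = i`. -/
noncomputable def angleCount (n : ℕ) (T : Finset (ℕ × ℕ)) (i : ℕ) : ℕ :=
  ((triangles 1 n T).filter fun t => t.1 = 1 ∧ t.2.2 - t.2.1 = i).card


lemma mem_allDiags {l r : ℕ} {p : ℕ × ℕ} : p ∈ allDiags l r ↔ IsDiag l r p.1 p.2 := by
  unfold allDiags
  simp only [mem_filter, mem_product, mem_range]
  constructor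
  · tauto
  · intro h
    obtain ⟨h1, h2, h3, h4⟩ := h
    exact ⟨⟨by omega, by omega⟩, ⟨h1, h2, h3, h4⟩⟩

lemma mem_triangulations {l r : ℕ} {T : Finset (ℕ × ℕ)} :
    T ∈ triangulations l r ↔
      (∀ p ∈ T, IsDiag l r p.1 p.2) ∧ T.card = r - l - 2 ∧
        ∀ d ∈ T, ∀ e ∈ T, ¬ Crosses d.1 d.2 e.1 e.2 := by
  unfold triangulations
  simp only [mem_filter, mem_powerset]
  constructor
  · rintro ⟨h1, h2, h3⟩
    exact ⟨fun p hp => mem_allDiags.1 (h1 hp), h2, h3⟩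
  · rintro ⟨h1, h2, h3⟩
    exact ⟨fun p hp => mem_allDiags.2 (h1 p hp), h2, h3⟩

/-- Any pairwise noncrossing set of diagonals of the polygon on `{l,…,r}` has at most
`r - l - 2` elements. -/
lemma noncross_card_le : ∀ r l (S : Finset (ℕ × ℕ)), (∀ p ∈ S, IsDiag l r p.1 p.2) →
    (∀ d ∈ S, ∀ e ∈ S, ¬ Crosses d.1 d.2 e.1 e.2) → S.card ≤ r - l - 2 := by
  intro r
  induction r using Nat.strong_induction_on with
  | _ r IH =>
    intro l S hdiag hcross
    rcases S.eq_empty_or_nonempty with rfl | hne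
    · simp
    obtain ⟨⟨i, j⟩, hm, hmin⟩ := S.exists_min_image (fun p => p.2 - p.1) hne
    simp only at hmin
    obtain ⟨hli, hij, hjr, hne'⟩ := hdiag _ hm
    simp only at hli hij hjr hne'
    -- no endpoint strictly inside (i, j)
    have hfree : ∀ p ∈ S, p ≠ (i, j) → (p.1 ≤ i ∨ j ≤ p.1) ∧ (p.2 ≤ i ∨ j ≤ p.2) := by
      rintro ⟨a, b⟩ hp hpne
      obtain ⟨hla, hab, hbr, -⟩ := hdiag _ hp
      have hc1 := hcross _ hp _ hm
      have hc2 := hcross _ hm _ hp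
      have hmn := hmin _ hp
      unfold Crosses at hc1 hc2
      simp only at hc1 hc2 hla hab hbr hmn
      omega
    set φ : ℕ → ℕ := fun t => if t ≤ i then t else t - 1 with hφ
    have hφeq : ∀ x, (x ≤ i ∨ j ≤ x) → (x ≤ i ∧ φ x = x) ∨ (j ≤ x ∧ φ x = x - 1) := by
      intro x hx
      rcases hx with hx | hx
      · exact Or.inl ⟨hx, if_pos hx⟩
      · exact Or.inr ⟨hx, if_neg (by omega)⟩
    have hφlt : ∀ x y, (x ≤ i ∨ j ≤ x) → (y ≤ i ∨ j ≤ y) → (φ x < φ y ↔ x < y) := by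
      intro x y hx hy
      rcases hφeq x hx with ⟨h1, h2⟩ | ⟨h1, h2⟩ <;>
        rcases hφeq y hy with ⟨h3, h4⟩ | ⟨h3, h4⟩ <;> rw [h2, h4] <;> omega
    set S' : Finset (ℕ × ℕ) := (S.erase (i, j)).image (fun p => (φ p.1, φ p.2)) with hS'
    have hfree' : ∀ p ∈ S.erase (i, j), (p.1 ≤ i ∨ j ≤ p.1) ∧ (p.2 ≤ i ∨ j ≤ p.2) :=
      fun p hp => hfree _ (Finset.mem_of_mem_erase hp) (Finset.ne_of_mem_erase hp)
    have hmemS' : ∀ p ∈ S.erase (i, j), IsDiag l (r - 1) (φ p.1) (φ p.2) := by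
      rintro ⟨a, b⟩ hp
      have hp' := Finset.mem_of_mem_erase hp
      have hpne : ¬(a = i ∧ b = j) := by
        have := Finset.ne_of_mem_erase hp
        simp only [Ne, Prod.mk.injEq] at this
        tauto
      obtain ⟨hla, hab, hbr, hne2⟩ := hdiag _ hp'
      simp only at hla hab hbr hne2
      obtain ⟨ha, hb⟩ := hfree' _ hp
      simp only at ha hb
      have hmn := hmin _ hp'
      simp only at hmn
      rcases hφeq a ha with ⟨h1, h2⟩ | ⟨h1, h2⟩ <;> rcases hφeq b hb with ⟨h3, h4⟩ | ⟨h3, h4⟩ <;>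
        unfold IsDiag <;> rw [h2, h4] <;> omega
    have hcard : S'.card = (S.erase (i, j)).card := by
      apply Finset.card_image_of_injOn
      rintro ⟨a, b⟩ hp ⟨c, d⟩ hq heq
      obtain ⟨ha, hb⟩ := hfree' _ hp
      obtain ⟨hc, hd⟩ := hfree' _ hq
      simp only at ha hb hc hd
      simp only [Prod.mk.injEq] at heq ⊢
      have e1 : ¬ (φ a < φ c) ∧ ¬ (φ c < φ a) := by rw [heq.1]; omega
      have e2 : ¬ (φ b < φ d) ∧ ¬ (φ d < φ b) := by rw [heq.2]; omega
      rw [hφlt a c ha hc, hφlt c a hc ha] at e1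
      rw [hφlt b d hb hd, hφlt d b hd hb] at e2
      omega
    have hr3 : l + 3 ≤ r := by omega
    have hle : S'.card ≤ r - 1 - l - 2 := by
      apply IH (r-1) (by omega) l
      · rintro ⟨x, y⟩ hxy
        simp only [hS', Finset.mem_image, Prod.mk.injEq] at hxy
        obtain ⟨p, hp, hx, hy⟩ := hxy
        subst hx hy
        exact hmemS' _ hp
      · rintro ⟨x, y⟩ hxy ⟨z, w⟩ hzw
        simp only [hS', Finset.mem_image, Prod.mk.injEq] at hxy hzw
        obtain ⟨p, hp, hx, hy⟩ := hxy
        obtain ⟨q, hq, hz, hw⟩ := hzw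
        subst hx hy hz hw
        obtain ⟨hpa, hpb⟩ := hfree' _ hp
        obtain ⟨hqa, hqb⟩ := hfree' _ hq
        intro hcr
        apply hcross _ (Finset.mem_of_mem_erase hp) _ (Finset.mem_of_mem_erase hq)
        simp only [Crosses] at hcr ⊢
        rcases hcr with ⟨h1, h2, h3⟩ | ⟨h1, h2, h3⟩
        · left
          rw [hφlt _ _ hpa hqa] at h1
          rw [hφlt _ _ hqa hpb] at h2
          rw [hφlt _ _ hpb hqb] at h3
          exact ⟨h1, h2, h3⟩
        · right
          rw [hφlt _ _ hqa hpa] at h1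
          rw [hφlt _ _ hpa hqb] at h2
          rw [hφlt _ _ hqb hpb] at h3
          exact ⟨h1, h2, h3⟩
    have hpos : 0 < S.card := Finset.card_pos.2 hne
    have : S.card = (S.erase (i, j)).card + 1 := by
      rw [Finset.card_erase_of_mem hm]; omega
    omega

noncomputable def apex (r : ℕ) (T : Finset (ℕ × ℕ)) : ℕ :=
  (insert (r - 1) ((T.filter fun d => d.2 = r).image Prod.fst)).min'
    (Finset.insert_nonempty _ _)

lemma apex_le (r : ℕ) (T : Finset (ℕ × ℕ)) : apex r T ≤ r - 1 :=
  Finset.min'_le _ _ (Finset.mem_insert_self _ _)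

lemma apex_cases (r : ℕ) (T : Finset (ℕ × ℕ)) : apex r T = r - 1 ∨ (apex r T, r) ∈ T := by
  have h := Finset.min'_mem (insert (r - 1) ((T.filter fun d => d.2 = r).image Prod.fst))
    (Finset.insert_nonempty _ _)
  rw [Finset.mem_insert] at h
  rcases h with h | h
  · exact Or.inl h
  · right
    rw [Finset.mem_image] at h
    obtain ⟨d, hd, hd1⟩ := h
    rw [Finset.mem_filter] at hd
    have : d = (apex r T, r) := by
      rw [Prod.ext_iff]; exact ⟨hd1, hd.2⟩
    rw [← this]; exact hd.1

lemma apex_min {r : ℕ} {T : Finset (ℕ × ℕ)} {a : ℕ} (h : (a, r) ∈ T) : apex r T ≤ a := by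
  apply Finset.min'_le
  rw [Finset.mem_insert, Finset.mem_image]
  right
  exact ⟨(a, r), Finset.mem_filter.2 ⟨h, rfl⟩, rfl⟩

lemma apex_spec {l r : ℕ} {T : Finset (ℕ × ℕ)} (hlr : l + 2 ≤ r)
    (hT : T ∈ triangulations l r) :
    l < apex r T ∧ apex r T < r ∧
      (∀ d ∈ T, d.2 ≤ apex r T ∨ apex r T ≤ d.1) ∧
      (l + 2 ≤ apex r T → (l, apex r T) ∈ T) ∧
      (apex r T + 2 ≤ r → (apex r T, r) ∈ T) := by
  obtain ⟨hdiag, hcard, hcross⟩ := mem_triangulations.1 hT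
  suffices h : ∀ k, apex r T = k → l < k ∧ k < r ∧ (∀ d ∈ T, d.2 ≤ k ∨ k ≤ d.1) ∧
      (l + 2 ≤ k → (l, k) ∈ T) ∧ (k + 2 ≤ r → (k, r) ∈ T) by
    exact h _ rfl
  intro k hk
  have hkr : k ≤ r - 1 := hk ▸ apex_le r T
  have hlk : l < k := by
    rcases apex_cases r T with h | h <;> rw [hk] at h
    · omega
    · obtain ⟨h1, h2, h3, h4⟩ : IsDiag l r k r := hdiag _ h
      omega
  have hkrT : k + 2 ≤ r → (k, r) ∈ T := by
    intro h
    rcases apex_cases r T with h' | h' <;> rw [hk] at h'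
    · omega
    · exact h'
  have hsep : ∀ d ∈ T, d.2 ≤ k ∨ k ≤ d.1 := by
    rintro ⟨a, b⟩ hd
    by_contra hcon
    push_neg at hcon
    obtain ⟨h1, h2⟩ := hcon
    simp only at h1 h2
    obtain ⟨hla, hab, hbr, -⟩ : IsDiag l r a b := hdiag _ hd
    rcases Nat.eq_or_lt_of_le hbr with rfl | hblt
    · exact absurd (hk ▸ apex_min hd) (by omega)
    · have hkT : (k, r) ∈ T := hkrT (by omega)
      exact hcross _ hd _ hkT (Or.inl ⟨by omega, by omega, by omega⟩)
  refine ⟨hlk, by omega, hsep, ?_, hkrT⟩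
  intro hl2
  by_contra hno
  have hdiag' : ∀ p ∈ insert (l, k) T, IsDiag l r p.1 p.2 := by
    intro p hp
    rcases Finset.mem_insert.1 hp with rfl | hp'
    · exact ⟨le_refl l, hl2, by omega, by omega⟩
    · exact hdiag _ hp'
  have hcross' : ∀ d ∈ insert (l, k) T, ∀ e ∈ insert (l, k) T,
      ¬ Crosses d.1 d.2 e.1 e.2 := by
    intro d hd e he
    rcases Finset.mem_insert.1 hd with rfl | hd' <;>
      rcases Finset.mem_insert.1 he with rfl | he'
    · unfold Crosses; simp only; omega
    · have h1 := hsep _ he'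
      have h2 := (hdiag _ he').1
      unfold Crosses; simp only at h1 h2 ⊢; omega
    · have h1 := hsep _ hd'
      have h2 := (hdiag _ hd').1
      unfold Crosses; simp only at h1 h2 ⊢; omega
    · exact hcross _ hd' _ he'
  have hle := noncross_card_le r l _ hdiag' hcross'
  rw [Finset.card_insert_of_notMem hno] at hle
  omega

noncomputable def split1 (l k : ℕ) (T : Finset (ℕ × ℕ)) : Finset (ℕ × ℕ) :=
  T.filter fun d => d.2 ≤ k ∧ d ≠ (l, k)

noncomputable def split2 (k r : ℕ) (T : Finset (ℕ × ℕ)) : Finset (ℕ × ℕ) :=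
  T.filter fun d => k ≤ d.1 ∧ d ≠ (k, r)

noncomputable def glueD (l k r : ℕ) : Finset (ℕ × ℕ) :=
  (if l + 2 ≤ k then {(l, k)} else ∅) ∪ (if k + 2 ≤ r then {(k, r)} else ∅)

noncomputable def glue (l k r : ℕ) (T1 T2 : Finset (ℕ × ℕ)) : Finset (ℕ × ℕ) :=
  (T1 ∪ T2) ∪ glueD l k r

lemma mem_glueD {l k r : ℕ} {d : ℕ × ℕ} :
    d ∈ glueD l k r ↔ (l + 2 ≤ k ∧ d = (l, k)) ∨ (k + 2 ≤ r ∧ d = (k, r)) := by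
  unfold glueD
  rw [Finset.mem_union]
  constructor
  · intro h
    rcases h with h | h <;> [left; right] <;> split_ifs at h with h' <;>
      simp only [Finset.mem_singleton, Finset.notMem_empty] at h <;> exact ⟨h', h⟩
  · rintro (⟨h1, h2⟩ | ⟨h1, h2⟩) <;> [left; right] <;> rw [if_pos h1, Finset.mem_singleton] <;>
      exact h2

lemma mem_glue {l k r : ℕ} {T1 T2 : Finset (ℕ × ℕ)} {d : ℕ × ℕ} :
    d ∈ glue l k r T1 T2 ↔
      d ∈ T1 ∨ d ∈ T2 ∨ (l + 2 ≤ k ∧ d = (l, k)) ∨ (k + 2 ≤ r ∧ d = (k, r)) := by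
  unfold glue
  rw [Finset.mem_union, Finset.mem_union, mem_glueD, or_assoc]

lemma card_glueD (l k r : ℕ) (hlk : l < k) (hkr : k < r) :
    (glueD l k r).card = (if l + 2 ≤ k then 1 else 0) + (if k + 2 ≤ r then 1 else 0) := by
  unfold glueD
  split_ifs with h1 h2 h2
  · rw [Finset.card_union_of_disjoint (by simp [Prod.ext_iff]; omega)]; simp
  · simp
  · simp
  · simp

theorem split_spec {l r : ℕ} {T : Finset (ℕ × ℕ)} (hlr : l + 2 ≤ r)
    (hT : T ∈ triangulations l r) :
    l < apex r T ∧ apex r T < r ∧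
      split1 l (apex r T) T ∈ triangulations l (apex r T) ∧
      split2 (apex r T) r T ∈ triangulations (apex r T) r ∧
      glue l (apex r T) r (split1 l (apex r T) T) (split2 (apex r T) r T) = T := by
  obtain ⟨hlk, hkr, hsep, hlkT, hkrT⟩ := apex_spec hlr hT
  obtain ⟨hdiag, hcard, hcross⟩ := mem_triangulations.1 hT
  set k := apex r T with hk
  clear_value k
  refine ⟨hlk, hkr, ?_⟩
  have hdiag1 : ∀ p ∈ split1 l k T, IsDiag l k p.1 p.2 := by
    rintro ⟨a, b⟩ hp
    rw [split1, Finset.mem_filter] at hp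
    obtain ⟨hpT, hbk, hne⟩ := hp
    obtain ⟨h1, h2, h3, h4⟩ : IsDiag l r a b := hdiag _ hpT
    simp only [Ne, Prod.mk.injEq] at hne hbk
    exact ⟨h1, h2, hbk, by tauto⟩
  have hdiag2 : ∀ p ∈ split2 k r T, IsDiag k r p.1 p.2 := by
    rintro ⟨a, b⟩ hp
    rw [split2, Finset.mem_filter] at hp
    obtain ⟨hpT, hka, hne⟩ := hp
    obtain ⟨h1, h2, h3, h4⟩ : IsDiag l r a b := hdiag _ hpT
    simp only [Ne, Prod.mk.injEq] at hne hka
    exact ⟨hka, h2, h3, by tauto⟩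
  have hcross1 : ∀ d ∈ split1 l k T, ∀ e ∈ split1 l k T, ¬ Crosses d.1 d.2 e.1 e.2 :=
    fun d hd e he => hcross _ (Finset.mem_of_mem_filter _ hd) _ (Finset.mem_of_mem_filter _ he)
  have hcross2 : ∀ d ∈ split2 k r T, ∀ e ∈ split2 k r T, ¬ Crosses d.1 d.2 e.1 e.2 :=
    fun d hd e he => hcross _ (Finset.mem_of_mem_filter _ hd) _ (Finset.mem_of_mem_filter _ he)
  have hc1 := noncross_card_le k l _ hdiag1 hcross1
  have hc2 := noncross_card_le r k _ hdiag2 hcross2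
  -- partition of T
  have hunion : (split1 l k T ∪ split2 k r T) ∪ glueD l k r = T := by
    ext ⟨a, b⟩
    rw [Finset.mem_union, Finset.mem_union, mem_glueD]
    constructor
    · rintro ((h | h) | h)
      · exact Finset.mem_of_mem_filter _ h
      · exact Finset.mem_of_mem_filter _ h
      · rcases h with ⟨h1, h2⟩ | ⟨h1, h2⟩
        · rw [h2]; exact hlkT h1
        · rw [h2]; exact hkrT h1
    · intro hd
      by_cases hel : (a, b) = ((l : ℕ), (k : ℕ))
      · right; left
        obtain ⟨h1, h2, h3, h4⟩ : IsDiag l r a b := hdiag _ hd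
        rw [Prod.mk.injEq] at hel
        exact ⟨by omega, by rw [Prod.mk.injEq]; exact hel⟩
      · by_cases her : (a, b) = ((k : ℕ), (r : ℕ))
        · right; right
          obtain ⟨h1, h2, h3, h4⟩ : IsDiag l r a b := hdiag _ hd
          rw [Prod.mk.injEq] at her
          exact ⟨by omega, by rw [Prod.mk.injEq]; exact her⟩
        · left
          rcases hsep _ hd with h | h
          · left; rw [split1, Finset.mem_filter]; exact ⟨hd, h, hel⟩
          · right; rw [split2, Finset.mem_filter]; exact ⟨hd, h, her⟩
  have hdisj1 : Disjoint (split1 l k T) (split2 k r T) := by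
    rw [Finset.disjoint_left]
    rintro ⟨a, b⟩ h1 h2
    rw [split1, Finset.mem_filter] at h1
    rw [split2, Finset.mem_filter] at h2
    obtain ⟨h3, h4, -⟩ : IsDiag l r a b := hdiag _ h1.1
    have hx : b ≤ k := h1.2.1
    have hy : k ≤ a := h2.2.1
    omega
  have hdisj2 : Disjoint (split1 l k T ∪ split2 k r T) (glueD l k r) := by
    rw [Finset.disjoint_left]
    rintro ⟨a, b⟩ h1 h2
    rw [mem_glueD] at h2
    rw [Finset.mem_union, split1, split2, Finset.mem_filter, Finset.mem_filter] at h1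
    rcases h2 with ⟨h2, he⟩ | ⟨h2, he⟩ <;> rw [Prod.mk.injEq] at he <;>
      rcases h1 with ⟨-, h3, h4⟩ | ⟨-, h3, h4⟩ <;> simp only [Ne, Prod.mk.injEq] at h3 h4 <;>
      omega
  have hcardT : (split1 l k T).card + (split2 k r T).card + (glueD l k r).card = r - l - 2 := by
    have h := congrArg Finset.card hunion
    rw [Finset.card_union_of_disjoint hdisj2, Finset.card_union_of_disjoint hdisj1, hcard] at h
    exact h
  rw [card_glueD l k r hlk hkr] at hcardT
  have hcount1 : (split1 l k T).card = k - l - 2 := by split_ifs at hcardT <;> omega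
  have hcount2 : (split2 k r T).card = r - k - 2 := by split_ifs at hcardT <;> omega
  refine ⟨mem_triangulations.2 ⟨hdiag1, hcount1, hcross1⟩,
    mem_triangulations.2 ⟨hdiag2, hcount2, hcross2⟩, ?_⟩
  rw [glue, hunion]

lemma not_crosses_of_sep {a b c d : ℕ}
    (h : b ≤ c ∨ d ≤ a ∨ (a ≤ c ∧ d ≤ b) ∨ (c ≤ a ∧ b ≤ d)) : ¬ Crosses a b c d := by
  unfold Crosses; omega

theorem glue_spec {l k r : ℕ} {T1 T2 : Finset (ℕ × ℕ)} (hlk : l < k) (hkr : k < r)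
    (h1 : T1 ∈ triangulations l k) (h2 : T2 ∈ triangulations k r) :
    glue l k r T1 T2 ∈ triangulations l r ∧ apex r (glue l k r T1 T2) = k ∧
      split1 l k (glue l k r T1 T2) = T1 ∧ split2 k r (glue l k r T1 T2) = T2 := by
  obtain ⟨hdiag1, hcard1, hcross1⟩ := mem_triangulations.1 h1
  obtain ⟨hdiag2, hcard2, hcross2⟩ := mem_triangulations.1 h2
  -- basic bounds
  have hb1 : ∀ p ∈ T1, l ≤ p.1 ∧ p.1 + 2 ≤ p.2 ∧ p.2 ≤ k ∧ ¬(p.1 = l ∧ p.2 = k) := hdiag1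
  have hb2 : ∀ p ∈ T2, k ≤ p.1 ∧ p.1 + 2 ≤ p.2 ∧ p.2 ≤ r ∧ ¬(p.1 = k ∧ p.2 = r) := hdiag2
  have hdiagG : ∀ p ∈ glue l k r T1 T2, IsDiag l r p.1 p.2 := by
    intro p hp
    rcases mem_glue.1 hp with h | h | ⟨hc, he⟩ | ⟨hc, he⟩
    · have := hb1 _ h; exact ⟨this.1, this.2.1, by omega, by omega⟩
    · have := hb2 _ h; exact ⟨by omega, this.2.1, this.2.2.1, by omega⟩
    · rw [he]; exact ⟨le_refl _, hc, by omega, by omega⟩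
    · rw [he]; exact ⟨by omega, hc, le_refl _, by omega⟩
  have hcrossG : ∀ d ∈ glue l k r T1 T2, ∀ e ∈ glue l k r T1 T2,
      ¬ Crosses d.1 d.2 e.1 e.2 := by
    intro d hd e he
    rcases mem_glue.1 hd with hd' | hd' | ⟨hcd, hed⟩ | ⟨hcd, hed⟩ <;>
      rcases mem_glue.1 he with he' | he' | ⟨hce, hee⟩ | ⟨hce, hee⟩
    · exact hcross1 _ hd' _ he'
    · have := hb1 _ hd'; have := hb2 _ he'
      exact not_crosses_of_sep (by omega)
    · have := hb1 _ hd'; rw [hee]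
      exact not_crosses_of_sep (by simp only; omega)
    · have := hb1 _ hd'; rw [hee]
      exact not_crosses_of_sep (by simp only; omega)
    · have := hb2 _ hd'; have := hb1 _ he'
      exact not_crosses_of_sep (by omega)
    · exact hcross2 _ hd' _ he'
    · have := hb2 _ hd'; rw [hee]
      exact not_crosses_of_sep (by simp only; omega)
    · have := hb2 _ hd'; rw [hee]
      exact not_crosses_of_sep (by simp only; omega)
    · have := hb1 _ he'; rw [hed]
      exact not_crosses_of_sep (by simp only; omega)
    · have := hb2 _ he'; rw [hed]
      exact not_crosses_of_sep (by simp only; omega)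
    · rw [hed, hee]; exact not_crosses_of_sep (by simp only; omega)
    · rw [hed, hee]; exact not_crosses_of_sep (by simp only; omega)
    · have := hb1 _ he'; rw [hed]
      exact not_crosses_of_sep (by simp only; omega)
    · have := hb2 _ he'; rw [hed]
      exact not_crosses_of_sep (by simp only; omega)
    · rw [hed, hee]; exact not_crosses_of_sep (by simp only; omega)
    · rw [hed, hee]; exact not_crosses_of_sep (by simp only; omega)
  -- non-membership facts
  have hlkT1 : ((l : ℕ), (k : ℕ)) ∉ T1 := fun h => by
    obtain ⟨-, -, -, h4⟩ : IsDiag l k l k := hdiag1 _ h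
    exact h4 ⟨rfl, rfl⟩
  have hlkT2 : ((l : ℕ), (k : ℕ)) ∉ T2 := fun h => by
    obtain ⟨c1, -⟩ : IsDiag k r l k := hdiag2 _ h
    omega
  have hkrT1 : ((k : ℕ), (r : ℕ)) ∉ T1 := fun h => by
    obtain ⟨-, -, c3, -⟩ : IsDiag l k k r := hdiag1 _ h
    omega
  have hkrT2 : ((k : ℕ), (r : ℕ)) ∉ T2 := fun h => by
    obtain ⟨-, -, -, h4⟩ : IsDiag k r k r := hdiag2 _ h
    exact h4 ⟨rfl, rfl⟩
  have hdisj1 : Disjoint T1 T2 := by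
    rw [Finset.disjoint_left]
    intro p hp hq
    have := hb1 _ hp; have := hb2 _ hq
    omega
  have hdisj2 : Disjoint (T1 ∪ T2) (glueD l k r) := by
    rw [Finset.disjoint_left]
    intro p hp hq
    rcases mem_glueD.1 hq with ⟨-, he⟩ | ⟨-, he⟩ <;> subst he <;>
      rcases Finset.mem_union.1 hp with h | h <;> first
        | exact hlkT1 h | exact hlkT2 h | exact hkrT1 h | exact hkrT2 h
  have hcardG : (glue l k r T1 T2).card = r - l - 2 := by
    rw [glue, Finset.card_union_of_disjoint hdisj2, Finset.card_union_of_disjoint hdisj1,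
      hcard1, hcard2, card_glueD l k r hlk hkr]
    split_ifs <;> omega
  have hmemG : glue l k r T1 T2 ∈ triangulations l r :=
    mem_triangulations.2 ⟨hdiagG, hcardG, hcrossG⟩
  -- apex of the glued triangulation
  have hapex : apex r (glue l k r T1 T2) = k := by
    apply le_antisymm
    · by_cases h : k + 2 ≤ r
      · apply Finset.min'_le
        rw [Finset.mem_insert, Finset.mem_image]
        right
        refine ⟨(k, r), Finset.mem_filter.2 ⟨?_, rfl⟩, rfl⟩
        exact mem_glue.2 (Or.inr (Or.inr (Or.inr ⟨h, rfl⟩)))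
      · have : k = r - 1 := by omega
        rw [this]
        exact apex_le _ _
    · apply Finset.le_min'
      intro y hy
      rcases Finset.mem_insert.1 hy with rfl | hy
      · omega
      · rw [Finset.mem_image] at hy
        obtain ⟨d, hd, hd1⟩ := hy
        rw [Finset.mem_filter] at hd
        obtain ⟨hdG, hdr⟩ := hd
        rcases mem_glue.1 hdG with h | h | ⟨-, he⟩ | ⟨-, he⟩
        · have := hb1 _ h; omega
        · have := hb2 _ h; omega
        · rw [he] at hdr; simp only at hdr; omega
        · rw [he] at hd1; simp only at hd1; omega
  refine ⟨hmemG, hapex, ?_, ?_⟩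
  · ext ⟨a, b⟩
    rw [split1, Finset.mem_filter]
    constructor
    · rintro ⟨hG, hbk, hne⟩
      rcases mem_glue.1 hG with h | h | ⟨-, he⟩ | ⟨-, he⟩
      · exact h
      · have := hb2 _ h; simp only at this hbk; omega
      · exact absurd he hne
      · rw [Prod.mk.injEq] at he; simp only at hbk; omega
    · intro h
      have := hb1 _ h
      refine ⟨mem_glue.2 (Or.inl h), this.2.2.1, ?_⟩
      rintro he
      rw [he] at h
      exact hlkT1 h
  · ext ⟨a, b⟩
    rw [split2, Finset.mem_filter]
    constructor
    · rintro ⟨hG, hka, hne⟩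
      rcases mem_glue.1 hG with h | h | ⟨-, he⟩ | ⟨-, he⟩
      · have := hb1 _ h; simp only at this hka; omega
      · exact h
      · rw [Prod.mk.injEq] at he; simp only at hka; omega
      · exact absurd he hne
    · intro h
      have := hb2 _ h
      refine ⟨mem_glue.2 (Or.inr (Or.inl h)), this.1, ?_⟩
      rintro he
      rw [he] at h
      exact hkrT2 h

lemma mem_triangles {l r : ℕ} {T : Finset (ℕ × ℕ)} {t : ℕ × ℕ × ℕ} :
    t ∈ triangles l r T ↔ t.2.2 ≤ r ∧ t.1 < t.2.1 ∧ t.2.1 < t.2.2 ∧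
      IsSide l r T t.1 t.2.1 ∧ IsSide l r T t.2.1 t.2.2 ∧ IsSide l r T t.1 t.2.2 := by
  unfold triangles
  simp only [mem_filter, mem_product, mem_range]
  constructor
  · rintro ⟨⟨a1, a2, a3⟩, b1, b2, b3⟩
    exact ⟨by omega, b1, b2, b3⟩
  · rintro ⟨a1, b1, b2, b3⟩
    exact ⟨⟨by omega, by omega, by omega⟩, b1, b2, b3⟩

section GlueTriangles

variable {l k r : ℕ} {T1 T2 : Finset (ℕ × ℕ)}

theorem glue_triangles (hlk : l < k) (hkr : k < r)
    (h1 : T1 ∈ triangulations l k) (h2 : T2 ∈ triangulations k r) :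
    triangles l r (glue l k r T1 T2) =
      (triangles l k T1 ∪ triangles k r T2) ∪ {((l : ℕ), (k : ℕ), (r : ℕ))} ∧
    Disjoint (triangles l k T1) (triangles k r T2) ∧
    Disjoint (triangles l k T1 ∪ triangles k r T2) {((l : ℕ), (k : ℕ), (r : ℕ))} := by
  obtain ⟨hdiag1, hcard1, hcross1⟩ := mem_triangulations.1 h1
  obtain ⟨hdiag2, hcard2, hcross2⟩ := mem_triangulations.1 h2
  have hb1 : ∀ p ∈ T1, l ≤ p.1 ∧ p.1 + 2 ≤ p.2 ∧ p.2 ≤ k ∧ ¬(p.1 = l ∧ p.2 = k) := hdiag1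
  have hb2 : ∀ p ∈ T2, k ≤ p.1 ∧ p.1 + 2 ≤ p.2 ∧ p.2 ≤ r ∧ ¬(p.1 = k ∧ p.2 = r) := hdiag2
  -- side transfer lemmas
  have side_left : ∀ a b : ℕ, b ≤ k →
      (IsSide l r (glue l k r T1 T2) a b ↔ IsSide l k T1 a b) := by
    intro a b hbk
    constructor
    · rintro (he | hm)
      · rcases he with ⟨e1, e2, e3⟩ | ⟨e1, e2⟩
        · exact Or.inl (Or.inl ⟨e1, e2, hbk⟩)
        · omega
      · rcases mem_glue.1 hm with h | h | ⟨hc, he⟩ | ⟨hc, he⟩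
        · exact Or.inr h
        · have := hb2 _ h; simp only at this; omega
        · rw [Prod.mk.injEq] at he
          exact Or.inl (Or.inr ⟨he.1, he.2⟩)
        · rw [Prod.mk.injEq] at he; omega
    · rintro (he | hm)
      · rcases he with ⟨e1, e2, e3⟩ | ⟨e1, e2⟩
        · exact Or.inl (Or.inl ⟨e1, e2, by omega⟩)
        · rw [e1, e2]
          by_cases hc : l + 2 ≤ k
          · exact Or.inr (mem_glue.2 (Or.inr (Or.inr (Or.inl ⟨hc, rfl⟩))))
          · exact Or.inl (Or.inl ⟨le_refl _, by omega, by omega⟩)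
      · exact Or.inr (mem_glue.2 (Or.inl hm))
  have side_right : ∀ a b : ℕ, k ≤ a →
      (IsSide l r (glue l k r T1 T2) a b ↔ IsSide k r T2 a b) := by
    intro a b hka
    constructor
    · rintro (he | hm)
      · rcases he with ⟨e1, e2, e3⟩ | ⟨e1, e2⟩
        · exact Or.inl (Or.inl ⟨hka, e2, e3⟩)
        · omega
      · rcases mem_glue.1 hm with h | h | ⟨hc, he⟩ | ⟨hc, he⟩
        · have := hb1 _ h; simp only at this; omega
        · exact Or.inr h
        · rw [Prod.mk.injEq] at he; omega
        · rw [Prod.mk.injEq] at he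
          exact Or.inl (Or.inr ⟨he.1, he.2⟩)
    · rintro (he | hm)
      · rcases he with ⟨e1, e2, e3⟩ | ⟨e1, e2⟩
        · exact Or.inl (Or.inl ⟨by omega, e2, e3⟩)
        · rw [e1, e2]
          by_cases hc : k + 2 ≤ r
          · exact Or.inr (mem_glue.2 (Or.inr (Or.inr (Or.inr ⟨hc, rfl⟩))))
          · exact Or.inl (Or.inl ⟨by omega, by omega, by omega⟩)
      · exact Or.inr (mem_glue.2 (Or.inr (Or.inl hm)))
  have side_cross : ∀ a b : ℕ, a < k → k < b →
      IsSide l r (glue l k r T1 T2) a b → a = l ∧ b = r := by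
    intro a b hak hkb hs
    rcases hs with he | hm
    · rcases he with ⟨e1, e2, e3⟩ | ⟨e1, e2⟩
      · omega
      · exact ⟨e1, e2⟩
    · rcases mem_glue.1 hm with h | h | ⟨hc, he⟩ | ⟨hc, he⟩
      · have := hb1 _ h; simp only at this; omega
      · have := hb2 _ h; simp only at this; omega
      · rw [Prod.mk.injEq] at he; omega
      · rw [Prod.mk.injEq] at he; omega
  -- lower/upper bounds from sub-polygon sides
  have upper1 : ∀ a b : ℕ, IsSide l k T1 a b → b ≤ k := by
    intro a b hs
    rcases hs with (⟨e1, e2, e3⟩ | ⟨e1, e2⟩) | hm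
    · exact e3
    · omega
    · exact (hb1 _ hm).2.2.1
  have lower2 : ∀ a b : ℕ, IsSide k r T2 a b → k ≤ a := by
    intro a b hs
    rcases hs with (⟨e1, e2, e3⟩ | ⟨e1, e2⟩) | hm
    · exact e1
    · omega
    · exact (hb2 _ hm).1
  have happ : triangles l r (glue l k r T1 T2) =
      (triangles l k T1 ∪ triangles k r T2) ∪ {((l : ℕ), (k : ℕ), (r : ℕ))} := by
    ext ⟨a, b, c⟩
    rw [Finset.mem_union, Finset.mem_union, Finset.mem_singleton]
    simp only [mem_triangles, Prod.mk.injEq]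
    constructor
    · rintro ⟨hcr, hab, hbc, s1, s2, s3⟩
      by_cases hck : c ≤ k
      · left; left
        exact ⟨hck, hab, hbc, (side_left a b (by omega)).1 s1,
          (side_left b c (by omega)).1 s2, (side_left a c (by omega)).1 s3⟩
      · by_cases hka : k ≤ a
        · left; right
          exact ⟨hcr, hab, hbc, (side_right a b hka).1 s1,
            (side_right b c (by omega)).1 s2, (side_right a c hka).1 s3⟩
        · right
          -- a < k < c
          obtain ⟨hal, hcr'⟩ := side_cross a c (by omega) (by omega) s3
          have hbk1 : b ≤ k := by
            by_contra hcon
            obtain ⟨h5, h6⟩ := side_cross a b (by omega) (by omega) s1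
            omega
          have hbk2 : k ≤ b := by
            by_contra hcon
            obtain ⟨h5, h6⟩ := side_cross b c (by omega) (by omega) s2
            omega
          exact ⟨hal, by omega, hcr'⟩
    · rintro ((⟨hck, hab, hbc, s1, s2, s3⟩ | ⟨hcr, hab, hbc, s1, s2, s3⟩) | ⟨he1, he2, he3⟩)
      · refine ⟨by omega, hab, hbc, ?_, ?_, ?_⟩
        · exact (side_left a b (by omega)).2 s1
        · exact (side_left b c (by omega)).2 s2
        · exact (side_left a c (by omega)).2 s3
      · have hka : k ≤ a := lower2 _ _ s1
        refine ⟨hcr, hab, hbc, ?_, ?_, ?_⟩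
        · exact (side_right a b hka).2 s1
        · exact (side_right b c (by omega)).2 s2
        · exact (side_right a c hka).2 s3
      · rw [he1, he2, he3]
        refine ⟨le_refl _, hlk, hkr, ?_, ?_, ?_⟩
        · exact (side_left l k (le_refl k)).2 (Or.inl (Or.inr ⟨rfl, rfl⟩))
        · exact (side_right k r (le_refl k)).2 (Or.inl (Or.inr ⟨rfl, rfl⟩))
        · exact Or.inl (Or.inr ⟨rfl, rfl⟩)
  refine ⟨happ, ?_, ?_⟩
  · rw [Finset.disjoint_left]
    rintro ⟨a, b, c⟩ hp hq
    simp only [mem_triangles] at hp hq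
    obtain ⟨-, hab, hbc, s1, -, s3⟩ := hp
    obtain ⟨-, -, -, q1, -, -⟩ := hq
    have h5 : c ≤ k := upper1 a c s3
    have h6 : k ≤ a := lower2 a b q1
    omega
  · rw [Finset.disjoint_left]
    rintro ⟨a, b, c⟩ hp hq
    rw [Finset.mem_singleton, Prod.mk.injEq, Prod.mk.injEq] at hq
    obtain ⟨e1, e2, e3⟩ := hq
    rcases Finset.mem_union.1 hp with h | h
    · simp only [mem_triangles] at h
      have := upper1 a c h.2.2.2.2.2
      have := h.2.2.1
      omega
    · simp only [mem_triangles] at h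
      have := lower2 a b h.2.2.2.1
      have := h.2.1
      omega

noncomputable def Nf (l r : ℕ) : ℕ := (triangulations l r).card

noncomputable def Sf (l r : ℕ) : ℕ :=
  ∑ T ∈ triangulations l r, ∑ t ∈ triangles l r T, (t.2.1 - t.1)

lemma triangulations_base (l : ℕ) : triangulations l (l + 1) = {∅} := by
  ext T
  rw [mem_triangulations, Finset.mem_singleton]
  constructor
  · rintro ⟨hdiag, -, -⟩
    rw [Finset.eq_empty_iff_forall_notMem]
    intro p hp
    have := hdiag _ hp
    obtain ⟨h1, h2, h3, -⟩ := this
    omega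
  · rintro rfl
    refine ⟨by simp, by simp, by simp⟩

lemma triangles_base (l : ℕ) : triangles l (l + 1) (∅ : Finset (ℕ × ℕ)) = ∅ := by
  rw [Finset.eq_empty_iff_forall_notMem]
  rintro ⟨a, b, c⟩ h
  rw [mem_triangles] at h
  obtain ⟨h1, h2, h3, s1, s2, -⟩ := h
  simp only at h1 h2 h3 s1 s2
  rcases s1 with (⟨e1, -, -⟩ | ⟨e1, -⟩) | hm
  · rcases s2 with (⟨-, -, e3⟩ | ⟨-, e3⟩) | hm' <;> first | omega | exact absurd hm' (by simp)
  · rcases s2 with (⟨-, -, e3⟩ | ⟨-, e3⟩) | hm' <;> first | omega | exact absurd hm' (by simp)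
  · exact absurd hm (by simp)

lemma Nf_base (l : ℕ) : Nf l (l + 1) = 1 := by
  rw [Nf, triangulations_base]; simp

lemma Sf_base (l : ℕ) : Sf l (l + 1) = 0 := by
  rw [Sf, triangulations_base]
  simp [triangles_base]

lemma sum_glue {l r : ℕ} (hlr : l + 2 ≤ r) (F : Finset (ℕ × ℕ) → ℕ) :
    ∑ T ∈ triangulations l r, F T =
      ∑ k ∈ Ioo l r, ∑ p ∈ triangulations l k ×ˢ triangulations k r,
        F (glue l k r p.1 p.2) := by
  rw [← Finset.sum_fiberwise_of_maps_to (g := fun T => apex r T) (t := Ioo l r)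
    (fun T hT => by
      obtain ⟨h1, h2, -⟩ := split_spec hlr hT
      exact Finset.mem_Ioo.2 ⟨h1, h2⟩) F]
  apply Finset.sum_congr rfl
  intro k hk
  obtain ⟨hlk, hkr⟩ := Finset.mem_Ioo.1 hk
  symm
  apply Finset.sum_nbij' (fun p => glue l k r p.1 p.2)
    (fun T => (split1 l k T, split2 k r T))
  · rintro ⟨T1, T2⟩ hp
    rw [Finset.mem_product] at hp
    obtain ⟨hg, ha, -, -⟩ := glue_spec hlk hkr hp.1 hp.2
    exact Finset.mem_filter.2 ⟨hg, ha⟩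
  · intro T hT
    rw [Finset.mem_filter] at hT
    obtain ⟨hT', hap⟩ := hT
    obtain ⟨-, -, hs1, hs2, -⟩ := split_spec hlr hT'
    rw [hap] at hs1 hs2
    exact Finset.mem_product.2 ⟨hs1, hs2⟩
  · rintro ⟨T1, T2⟩ hp
    rw [Finset.mem_product] at hp
    obtain ⟨-, -, h3, h4⟩ := glue_spec hlk hkr hp.1 hp.2
    rw [Prod.mk.injEq]
    exact ⟨h3, h4⟩
  · intro T hT
    rw [Finset.mem_filter] at hT
    obtain ⟨hT', hap⟩ := hT
    obtain ⟨-, -, -, -, h5⟩ := split_spec hlr hT'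
    rw [hap] at h5
    exact h5
  · intro p hp
    rfl

lemma Nf_rec {l r : ℕ} (hlr : l + 2 ≤ r) :
    Nf l r = ∑ k ∈ Ioo l r, Nf l k * Nf k r := by
  rw [Nf, Finset.card_eq_sum_ones, sum_glue hlr]
  apply Finset.sum_congr rfl
  intro k hk
  rw [Finset.sum_const, Finset.card_product, smul_eq_mul, mul_one, Nf, Nf]

lemma Sf_rec {l r : ℕ} (hlr : l + 2 ≤ r) :
    Sf l r = ∑ k ∈ Ioo l r,
      (Nf k r * Sf l k + Nf l k * Sf k r + (k - l) * (Nf l k * Nf k r)) := by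
  rw [Sf, sum_glue hlr]
  apply Finset.sum_congr rfl
  intro k hk
  obtain ⟨hlk, hkr⟩ := Finset.mem_Ioo.1 hk
  have hinner : ∀ p ∈ triangulations l k ×ˢ triangulations k r,
      ∑ t ∈ triangles l r (glue l k r p.1 p.2), (t.2.1 - t.1) =
        (∑ t ∈ triangles l k p.1, (t.2.1 - t.1)) +
          (∑ t ∈ triangles k r p.2, (t.2.1 - t.1)) + (k - l) := by
    rintro ⟨T1, T2⟩ hp
    rw [Finset.mem_product] at hp
    obtain ⟨happ, hd1, hd2⟩ := glue_triangles hlk hkr hp.1 hp.2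
    rw [happ, Finset.sum_union hd2, Finset.sum_union hd1, Finset.sum_singleton]
  rw [Finset.sum_congr rfl hinner]
  rw [Finset.sum_product]
  have : ∀ T1 ∈ triangulations l k,
      ∑ T2 ∈ triangulations k r,
        ((∑ t ∈ triangles l k T1, (t.2.1 - t.1)) +
          (∑ t ∈ triangles k r T2, (t.2.1 - t.1)) + (k - l)) =
      Nf k r * (∑ t ∈ triangles l k T1, (t.2.1 - t.1)) + Sf k r + Nf k r * (k - l) := by
    intro T1 hT1
    rw [Finset.sum_add_distrib, Finset.sum_add_distrib, Finset.sum_const, Finset.sum_const]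
    rw [smul_eq_mul, smul_eq_mul, ← Nf, ← Sf]
  rw [Finset.sum_congr rfl this, Finset.sum_add_distrib, Finset.sum_add_distrib,
    Finset.sum_const, Finset.sum_const, ← Finset.mul_sum, ← Sf, ← Nf]
  rw [smul_eq_mul, smul_eq_mul]
  ring

noncomputable def gg : ℕ → ℕ := fun m => ∑ i ∈ range m, 4 ^ i * catalan (m - 1 - i)

lemma gg_zero : gg 0 = 0 := by simp [gg]

lemma gg_succ (m : ℕ) : gg (m + 1) = 4 * gg m + catalan m := by
  unfold gg
  rw [Finset.sum_range_succ' (fun i => 4 ^ i * catalan (m + 1 - 1 - i)) m]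
  simp only [pow_zero, one_mul, Nat.add_sub_cancel, Nat.sub_zero]
  rw [Finset.mul_sum]
  congr 1
  apply Finset.sum_congr rfl
  intro i hi
  have e : m - (i + 1) = m - 1 - i := by omega
  rw [e, pow_succ]
  ring

lemma catalan_succ_range (m : ℕ) :
    catalan (m + 1) = ∑ i ∈ range (m + 1), catalan i * catalan (m - i) := by
  rw [catalan_succ']
  rw [Finset.Nat.sum_antidiagonal_eq_sum_range_succ_mk]

lemma two_catalan_add (m : ℕ) :
    2 * catalan m + Nat.centralBinom (m + 1) = 4 * Nat.centralBinom m := by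
  have h1 := succ_mul_catalan_eq_centralBinom m
  have h2 := Nat.succ_mul_centralBinom_succ m
  apply Nat.eq_of_mul_eq_mul_left (Nat.succ_pos m)
  calc (m + 1) * (2 * catalan m + Nat.centralBinom (m + 1))
      = 2 * ((m + 1) * catalan m) + (m + 1) * Nat.centralBinom (m + 1) := by ring
    _ = 2 * Nat.centralBinom m + 2 * (2 * m + 1) * Nat.centralBinom m := by rw [h1, h2]
    _ = (m + 1) * (4 * Nat.centralBinom m) := by ring

lemma gg_closed : ∀ m, 2 * gg m + Nat.centralBinom m = 4 ^ m := by
  intro m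
  induction m with
  | zero => simp [gg_zero, Nat.centralBinom_zero]
  | succ m ih =>
    rw [gg_succ]
    have h3 := two_catalan_add m
    have h4 : (4 : ℕ) ^ (m + 1) = 4 * 4 ^ m := by rw [pow_succ]; ring
    omega

lemma gg_conv (m : ℕ) :
    ∑ i ∈ range (m + 1), (catalan (m - i) * gg i + catalan i * gg (m - i) +
      (i + 1) * (catalan i * catalan (m - i))) = gg (m + 1) := by
  have hrefl : ∑ i ∈ range (m + 1), catalan i * gg (m - i) =
      ∑ i ∈ range (m + 1), catalan (m - i) * gg i := by
    rw [← Finset.sum_range_reflect (fun i => catalan i * gg (m - i)) (m + 1)]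
    apply Finset.sum_congr rfl
    intro i hi
    rw [Finset.mem_range] at hi
    have e1 : m + 1 - 1 - i = m - i := by omega
    have e2 : m - (m - i) = i := by omega
    rw [e1, e2]
  rw [Finset.sum_add_distrib, Finset.sum_add_distrib, hrefl]
  have hcb : ∑ i ∈ range (m + 1), (i + 1) * (catalan i * catalan (m - i)) =
      ∑ i ∈ range (m + 1), Nat.centralBinom i * catalan (m - i) := by
    apply Finset.sum_congr rfl
    intro i hi
    rw [← mul_assoc, succ_mul_catalan_eq_centralBinom]
  rw [hcb]
  have : gg (m + 1) = ∑ i ∈ range (m + 1), 4 ^ i * catalan (m - i) := by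
    unfold gg
    apply Finset.sum_congr rfl
    intro i hi
    congr 1
  rw [this, ← Finset.sum_add_distrib, ← Finset.sum_add_distrib]
  apply Finset.sum_congr rfl
  intro i hi
  have := gg_closed i
  calc catalan (m - i) * gg i + catalan (m - i) * gg i + Nat.centralBinom i * catalan (m - i)
      = (2 * gg i + Nat.centralBinom i) * catalan (m - i) := by ring
    _ = 4 ^ i * catalan (m - i) := by rw [this]

lemma main_ind : ∀ d, 1 ≤ d → ∀ l, Nf l (l + d) = catalan (d - 1) ∧ Sf l (l + d) = gg (d - 1) := by
  intro d
  induction d using Nat.strong_induction_on with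
  | _ d IH =>
    intro hd l
    rcases Nat.lt_or_ge d 2 with hd2 | hd2
    · have : d = 1 := by omega
      subst this
      constructor <;> simp [Nf_base, Sf_base, gg_zero, catalan_zero]
    · obtain ⟨e, rfl⟩ : ∃ e, d = e + 2 := ⟨d - 2, by omega⟩
      have hIoo : Ioo l (l + (e + 2)) = (range (e + 1)).image (fun i => l + 1 + i) := by
        ext x
        simp only [Finset.mem_Ioo, Finset.mem_image, Finset.mem_range]
        constructor
        · rintro ⟨h1, h2⟩
          exact ⟨x - l - 1, by omega, by omega⟩
        · rintro ⟨i, hi, rfl⟩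
          omega
      have hinj : ∀ x ∈ range (e + 1), ∀ y ∈ range (e + 1),
          l + 1 + x = l + 1 + y → x = y := by intro x _ y _ h; omega
      -- the two IH values for each i
      have hNf1 : ∀ i, i < e + 1 → Nf l (l + 1 + i) = catalan i := by
        intro i hi
        have h := (IH (i + 1) (by omega) (by omega) l).1
        rw [show l + (i + 1) = l + 1 + i by omega] at h
        simpa using h
      have hSf1 : ∀ i, i < e + 1 → Sf l (l + 1 + i) = gg i := by
        intro i hi
        have h := (IH (i + 1) (by omega) (by omega) l).2
        rw [show l + (i + 1) = l + 1 + i by omega] at h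
        simpa using h
      have hNf2 : ∀ i, i < e + 1 → Nf (l + 1 + i) (l + (e + 2)) = catalan (e - i) := by
        intro i hi
        have h := (IH (e + 1 - i) (by omega) (by omega) (l + 1 + i)).1
        rw [show l + 1 + i + (e + 1 - i) = l + (e + 2) by omega] at h
        rw [show e + 1 - i - 1 = e - i by omega] at h
        exact h
      have hSf2 : ∀ i, i < e + 1 → Sf (l + 1 + i) (l + (e + 2)) = gg (e - i) := by
        intro i hi
        have h := (IH (e + 1 - i) (by omega) (by omega) (l + 1 + i)).2
        rw [show l + 1 + i + (e + 1 - i) = l + (e + 2) by omega] at h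
        rw [show e + 1 - i - 1 = e - i by omega] at h
        exact h
      constructor
      · rw [Nf_rec (by omega), hIoo, Finset.sum_image hinj]
        rw [show e + 2 - 1 = e + 1 by omega, catalan_succ_range]
        apply Finset.sum_congr rfl
        intro i hi
        rw [Finset.mem_range] at hi
        rw [hNf1 i hi, hNf2 i hi]
      · rw [Sf_rec (by omega), hIoo, Finset.sum_image hinj]
        rw [show e + 2 - 1 = e + 1 by omega, ← gg_conv]
        apply Finset.sum_congr rfl
        intro i hi
        rw [Finset.mem_range] at hi
        rw [hNf1 i hi, hNf2 i hi, hSf1 i hi, hSf2 i hi]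
        rw [show l + 1 + i - l = i + 1 by omega]

lemma cb_double (m : ℕ) :
    Nat.centralBinom (m + 1) = 2 * ((2 * m + 1).choose (m + 1)) := by
  rw [Nat.centralBinom_eq_two_mul_choose]
  rw [show 2 * (m + 1) = (2 * m + 1) + 1 by ring]
  rw [Nat.choose_succ_succ (2 * m + 1) m]
  have hsymm : (2 * m + 1).choose m = (2 * m + 1).choose (m + 1) := by
    have h := Nat.choose_symm (show m + 1 ≤ 2 * m + 1 by omega)
    rw [show 2 * m + 1 - (m + 1) = m by omega] at h
    exact h
  rw [hsymm]
  ring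


/-- the total sum over all triangulations of `P_n` of the sum of `j - l`
over the triangles `{l, j, r}`, `l < j < r` (Lemma 6). -/
theorem blue_total_sum (n : ℕ) (hn : 3 ≤ n) :
    ∑ T ∈ triangulations 1 n, ∑ t ∈ triangles 1 n T, (t.2.1 - t.1) =
      2 ^ (2 * n - 5) - (2 * n - 5).choose (n - 2) := by
  obtain ⟨m, rfl⟩ : ∃ m, n = m + 3 := ⟨n - 3, by omega⟩
  have h := (main_ind (m + 2) (by omega) 1).2
  rw [show 1 + (m + 2) = m + 3 by omega] at h
  rw [show m + 2 - 1 = m + 1 by omega] at h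
  have hgoal : Sf 1 (m + 3) = 2 ^ (2 * (m + 3) - 5) - (2 * (m + 3) - 5).choose (m + 3 - 2) := by
    rw [h]
    rw [show 2 * (m + 3) - 5 = 2 * m + 1 by omega, show m + 3 - 2 = m + 1 by omega]
    have hA := gg_closed (m + 1)
    rw [cb_double] at hA
    have h4 : (4 : ℕ) ^ (m + 1) = 2 * 2 ^ (2 * m + 1) := by
      rw [show (4 : ℕ) = 2 ^ 2 from rfl, ← pow_mul, show 2 * (m + 1) = (2 * m + 1) + 1 by ring,
        pow_succ]
      ring
    rw [h4] at hA
    omega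
  exact hgoal
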